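/- Let N ≥ 1, λ > 0 and s ∈ ℝ^N with s_1 ≤ s_2 ≤ … ≤ s_N. If π ∈ ℝ^N minimizes p_s over ℝ^N, then the vector π'' obtained by rearranging the components of π into nondecreasing order is also a minimizer of p_s over ℝ^N. -/
import Mathlib


noncomputable section

/-- The fused-lasso objective `p_s(π) = (1/2) Σ (π_i − s_i)² + λ Σ_{i<j} |π_i − π_j|`. -/
def pfun {N : ℕ} (lam : ℝ) (s π : Fin N → ℝ) : ℝ :=
  (1 / 2) * ∑ i, (π i - s i) ^ 2 + lam * ∑ i, ∑ j, if i < j then |π i - π j| else 0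

lemma tv_half {N : ℕ} (f : Fin N → ℝ) :
    (∑ i, ∑ j, if i < j then |f i - f j| else 0) =
      (1 / 2) * ∑ i, ∑ j, |f i - f j| := by
  have key : (∑ i, ∑ j, |f i - f j|) =
      (∑ i, ∑ j, if i < j then |f i - f j| else 0) +
      (∑ i, ∑ j, if j < i then |f i - f j| else 0) := by
    rw [← Finset.sum_add_distrib]
    congr 1; funext i
    rw [← Finset.sum_add_distrib]
    congr 1; funext j
    rcases lt_trichotomy i j with h | h | h
    · simp [h, not_lt_of_gt h]
    · simp [h]
    · simp [h, not_lt_of_gt h]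
  have symm : (∑ i, ∑ j, if j < i then |f i - f j| else 0) =
      (∑ i, ∑ j, if i < j then |f i - f j| else 0) := by
    rw [Finset.sum_comm]
    congr 1; funext i
    congr 1; funext j
    rw [abs_sub_comm]
  rw [key, symm]; ring

lemma tv_perm {N : ℕ} (f : Fin N → ℝ) (σ : Equiv.Perm (Fin N)) :
    (∑ i, ∑ j, if i < j then |f (σ i) - f (σ j)| else 0) =
      (∑ i, ∑ j, if i < j then |f i - f j| else 0) := by
  rw [tv_half (fun i => f (σ i)), tv_half f]
  congr 1
  rw [← Equiv.sum_comp σ (fun i => ∑ j, |f i - f j|)]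
  congr 1; funext i
  exact Equiv.sum_comp σ (fun j => |f (σ i) - f j|)

/-- if `s` is nondecreasing and `π` minimizes `p_s` over `ℝ^N`, then any
rearrangement `π ∘ σ` of the components of `π` into nondecreasing order is also a
minimizer of `p_s`. -/
theorem stmt_12 {N : ℕ} (hN : 1 ≤ N) (lam : ℝ) (hlam : 0 < lam) (s : Fin N → ℝ)
    (hs : Monotone s) (π : Fin N → ℝ) (hmin : ∀ ρ, pfun lam s π ≤ pfun lam s ρ)
    (σ : Equiv.Perm (Fin N)) (hmono : Monotone (π ∘ σ)) :
    ∀ ρ, pfun lam s (π ∘ σ) ≤ pfun lam s ρ := by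
  intro ρ
  refine le_trans ?_ (hmin ρ)
  unfold pfun
  have htv : (∑ i, ∑ j, if i < j then |(π ∘ σ) i - (π ∘ σ) j| else 0) =
      (∑ i, ∑ j, if i < j then |π i - π j| else 0) := tv_perm π σ
  rw [htv]
  have hq : (∑ i, ((π ∘ σ) i - s i) ^ 2) ≤ ∑ i, (π i - s i) ^ 2 := ?_
  · linarith
  have hmv : Monovary (π ∘ σ) s := hmono.monovary hs
  have h := hmv.sum_comp_perm_smul_le_sum_smul (σ := σ⁻¹)
  simp only [smul_eq_mul] at h
  have h' : (∑ i, π i * s i) ≤ ∑ i, π (σ i) * s i := by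
    simpa [Function.comp, Equiv.apply_symm_apply] using h
  have e1 : (∑ i, ((π ∘ σ) i - s i) ^ 2) =
      ∑ i, (π (σ i)) ^ 2 - 2 * ∑ i, π (σ i) * s i + ∑ i, (s i) ^ 2 := by
    simp only [Function.comp, sub_sq, mul_assoc]
    rw [Finset.sum_add_distrib, Finset.sum_sub_distrib, ← Finset.mul_sum]
  have e2 : (∑ i, (π i - s i) ^ 2) =
      ∑ i, (π i) ^ 2 - 2 * ∑ i, π i * s i + ∑ i, (s i) ^ 2 := by
    simp only [sub_sq, mul_assoc]
    rw [Finset.sum_add_distrib, Finset.sum_sub_distrib, ← Finset.mul_sum]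
  have e3 : (∑ i, (π (σ i)) ^ 2) = ∑ i, (π i) ^ 2 :=
    Equiv.sum_comp σ (fun i => (π i) ^ 2)
  rw [e1, e2, e3]
  linarith
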